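/- Let G be a finite connected simple graph, let σ be an automorphism of G, and let F be a subset of V(G) such that the five sets F, σ(F), σ²(F), σ³(F), σ⁴(F) form a partition of V(G). Set A₂ = F ∪ σ(F) and A₃ = F ∪ σ(F) ∪ σ²(F). Then for every natural number λ, D_λ(F, V(G)) = D_λ(A₃, A₃) − D_λ(A₂, A₂). -/

import Mathlib

/-! Write `d k = D_λ(F, σᵏ F)`. Graph automorphisms preserve distances, and the partition
hypothesis forces `σ⁵ F = F`, so `D_λ(σⁱ F, σʲ F) = d ((j - i) mod 5)`; symmetry of the distance
gives moreover `d (5 - k) = d k`. Hence `D_λ(F, V) = d 0 + 2 d 1 + 2 d 2`,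
`D_λ(A₃, A₃) = 3 d 0 + 4 d 1 + 2 d 2` and `D_λ(A₂, A₂) = 2 d 0 + 2 d 1`. -/

/-- `D_λ(F, K) = Σ_{u∈F} Σ_{v∈K} d_G(u,v)^λ`. -/
noncomputable def Dl {V : Type*} (G : SimpleGraph V) (l : ℕ) (F K : Finset V) : ℕ :=
  ∑ u ∈ F, ∑ v ∈ K, G.dist u v ^ l

open Finset Function

namespace SimpleGraph

variable {V W : Type*} {G : SimpleGraph V} {G' : SimpleGraph W}

theorem edist_map_le (f : G →g G') (u v : V) : G'.edist (f u) (f v) ≤ G.edist u v := by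
  by_cases hr : G.Reachable u v
  · obtain ⟨p, hp⟩ := hr.exists_walk_length_eq_edist
    calc G'.edist (f u) (f v) ≤ (p.map f).length := edist_le _
      _ = G.edist u v := by rw [Walk.length_map, hp]
  · simp [edist_eq_top_of_not_reachable hr]

theorem Iso.edist_eq (e : G ≃g G') (u v : V) : G'.edist (e u) (e v) = G.edist u v :=
  le_antisymm (edist_map_le e.toHom u v) <| by
    simpa using edist_map_le e.symm.toHom (e u) (e v)

theorem Iso.dist_eq (e : G ≃g G') (u v : V) : G'.dist (e u) (e v) = G.dist u v := by
  rw [dist, dist, e.edist_eq]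

theorem Iso.dist_iterate (σ : G ≃g G) (i : ℕ) (u v : V) :
    G.dist ((⇑σ)^[i] u) ((⇑σ)^[i] v) = G.dist u v := by
  induction i with
  | zero => rfl
  | succ i ih => rw [iterate_succ_apply', iterate_succ_apply', σ.dist_eq, ih]

end SimpleGraph

theorem Finset.isPeriodicPt_image_of_pairwiseDisjoint {α : Type*} [Fintype α] [DecidableEq α]
    {f : α → α} (hf : Injective f) {n : ℕ} {F : Finset α}
    (hdisj : (range n : Set ℕ).PairwiseDisjoint (fun i => F.image f^[i]))
    (hcover : (range n).biUnion (fun i => F.image f^[i]) = univ) :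
    IsPeriodicPt (image f) n F := by
  rw [IsPeriodicPt, IsFixedPt, iterate_image]
  refine eq_of_subset_of_card_le (fun x hx => ?_) (card_image_of_injective F (hf.iterate n)).ge
  obtain ⟨_ | j, hj, hxj⟩ := mem_biUnion.1 (hcover ▸ mem_univ x)
  · simpa using hxj
  rw [mem_range] at hj
  obtain ⟨m, rfl⟩ : ∃ m, n = m + 1 := ⟨n - 1, by omega⟩
  rw [iterate_succ', ← image_image] at hx hxj
  have hdisj' : Disjoint ((F.image f^[j]).image f) ((F.image f^[m]).image f) :=
    (disjoint_image hf).2 (hdisj (by simp; omega) (by simp) (by omega))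
  exact absurd hx (disjoint_left.1 hdisj' hxj)

section Dl

variable {V : Type*} {G : SimpleGraph V} {l : ℕ}

theorem Dl_comm (A B : Finset V) : Dl G l A B = Dl G l B A := by
  rw [Dl, Dl, sum_comm]
  simp only [SimpleGraph.dist_comm]

variable [DecidableEq V]

theorem Dl_biUnion_biUnion {ι κ : Type*} {s : Finset ι} {t : Finset κ} {A : ι → Finset V}
    {B : κ → Finset V} (hA : (s : Set ι).PairwiseDisjoint A) (hB : (t : Set κ).PairwiseDisjoint B) :
    Dl G l (s.biUnion A) (t.biUnion B) = ∑ i ∈ s, ∑ j ∈ t, Dl G l (A i) (B j) := by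
  simp only [Dl, sum_biUnion hA, sum_biUnion hB]
  exact sum_congr rfl fun _ _ => sum_comm

theorem Dl_image_iterate (σ : G ≃g G) (i : ℕ) (A B : Finset V) :
    Dl G l (A.image (⇑σ)^[i]) (B.image (⇑σ)^[i]) = Dl G l A B := by
  have hinj := σ.injective.iterate i
  simp only [Dl, sum_image hinj.injOn, σ.dist_iterate]

section Orbit

variable (σ : G ≃g G) {F : Finset V} {n : ℕ}

theorem Dl_image_iterate_image_iterate (hF : IsPeriodicPt (image σ) n F) {i : ℕ} (hi : i ≤ n)
    (j : ℕ) :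
    Dl G l (F.image (⇑σ)^[i]) (F.image (⇑σ)^[j]) =
      Dl G l F (F.image (⇑σ)^[(j + n - i) % n]) := by
  have hmod (m : ℕ) : F.image (⇑σ)^[m % n] = F.image (⇑σ)^[m] := by
    simpa only [iterate_image] using hF.iterate_mod_apply m
  rw [hmod, ← hmod j, ← Nat.add_mod_right, hmod, ← Nat.add_sub_cancel' (le_add_left hi),
    Nat.add_sub_cancel_left, iterate_add, ← image_image, Dl_image_iterate]

theorem Dl_image_iterate_sub (hF : IsPeriodicPt (image σ) n F) {k : ℕ} (hk : k ≤ n) :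
    Dl G l F (F.image (⇑σ)^[n - k]) = Dl G l F (F.image (⇑σ)^[k]) := by
  have hn : F.image (⇑σ)^[n] = F := by simpa only [IsPeriodicPt, IsFixedPt, iterate_image] using hF
  calc Dl G l F (F.image (⇑σ)^[n - k])
      = Dl G l (F.image (⇑σ)^[k]) ((F.image (⇑σ)^[n - k]).image (⇑σ)^[k]) :=
        (Dl_image_iterate σ k _ _).symm
    _ = Dl G l (F.image (⇑σ)^[k]) F := by
        rw [image_image, ← iterate_add, Nat.add_sub_cancel' hk, hn]
    _ = Dl G l F (F.image (⇑σ)^[k]) := Dl_comm _ _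

theorem Dl_range_biUnion_image_iterate (hF : IsPeriodicPt (image σ) n F)
    (hdisj : (range n : Set ℕ).PairwiseDisjoint fun i => F.image (⇑σ)^[i]) {a b : ℕ}
    (ha : a ≤ n) (hb : b ≤ n) :
    Dl G l ((range a).biUnion fun i => F.image (⇑σ)^[i])
        ((range b).biUnion fun j => F.image (⇑σ)^[j]) =
      ∑ i ∈ range a, ∑ j ∈ range b, Dl G l F (F.image (⇑σ)^[(j + n - i) % n]) := by
  rw [Dl_biUnion_biUnion (hdisj.subset (by simpa using ha)) (hdisj.subset (by simpa using hb))]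
  refine sum_congr rfl fun i hi => sum_congr rfl fun j _ => ?_
  exact Dl_image_iterate_image_iterate σ hF (by simp at hi; omega) j

end Orbit

end Dl

theorem stmt8_general {V : Type*} [Fintype V] [DecidableEq V]
    (G : SimpleGraph V) (σ : G ≃g G) (F : Finset V)
    (hdisj : ∀ i j : Fin 5, i ≠ j →
      Disjoint (F.image ((⇑σ)^[(i : ℕ)])) (F.image ((⇑σ)^[(j : ℕ)])))
    (hcover : Finset.univ.biUnion (fun i : Fin 5 => F.image ((⇑σ)^[(i : ℕ)])) = Finset.univ)
    (l : ℕ) :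
    (Dl G l F Finset.univ : ℤ) =
      (Dl G l (F ∪ F.image ⇑σ ∪ F.image ((⇑σ)^[2]))
            (F ∪ F.image ⇑σ ∪ F.image ((⇑σ)^[2])) : ℤ) -
        (Dl G l (F ∪ F.image ⇑σ) (F ∪ F.image ⇑σ) : ℤ) := by
  set S : ℕ → Finset V := fun i => F.image (⇑σ)^[i]
  have hdisj' : (range 5 : Set ℕ).PairwiseDisjoint S := fun i hi j hj hij =>
    hdisj ⟨i, by simpa using hi⟩ ⟨j, by simpa using hj⟩ (by simpa [Fin.ext_iff] using hij)
  have hcover' : (range 5).biUnion S = univ := by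
    rw [← hcover]
    ext x
    simp [S, Fin.exists_iff]
  have hF := isPeriodicPt_image_of_pairwiseDisjoint σ.injective hdisj' hcover'
  have hA1 : (range 1).biUnion S = F := by simp [S]
  have hA2 : (range 2).biUnion S = F ∪ F.image σ := by simp [S, range_add_one, union_comm]
  have hA3 : (range 3).biUnion S = F ∪ F.image σ ∪ F.image (⇑σ)^[2] := by
    simp [S, range_add_one, union_comm, union_left_comm]
  have h3 : Dl G l F (F.image (⇑σ)^[3]) = Dl G l F (F.image (⇑σ)^[2]) :=
    Dl_image_iterate_sub σ hF (k := 2) (by norm_num)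
  have h4 : Dl G l F (F.image (⇑σ)^[4]) = Dl G l F (F.image (⇑σ)^[1]) :=
    Dl_image_iterate_sub σ hF (k := 1) (by norm_num)
  rw [← hA3, ← hA2, ← hA1, ← hcover',
    Dl_range_biUnion_image_iterate σ hF hdisj' (a := 1) (b := 5) (by norm_num) le_rfl,
    Dl_range_biUnion_image_iterate σ hF hdisj' (a := 3) (b := 3) (by norm_num) (by norm_num),
    Dl_range_biUnion_image_iterate σ hF hdisj' (a := 2) (b := 2) (by norm_num) (by norm_num)]
  simp only [sum_range_succ, sum_range_zero, Nat.reduceAdd, Nat.reduceSub, Nat.reduceMod,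
    zero_add, h3, h4]
  omega

/-- If `σ` is an automorphism of a finite connected simple graph `G` and
`F, σ(F), σ²(F), σ³(F), σ⁴(F)` partition the vertex set, then with `A₂ = F ∪ σ(F)` and
`A₃ = F ∪ σ(F) ∪ σ²(F)` one has `D_λ(F, V(G)) = D_λ(A₃, A₃) − D_λ(A₂, A₂)`. -/
theorem stmt8 {V : Type*} [Fintype V] [DecidableEq V]
    (G : SimpleGraph V) (hG : G.Connected) (σ : G ≃g G) (F : Finset V)
    (hdisj : ∀ i j : Fin 5, i ≠ j →
      Disjoint (F.image ((⇑σ)^[(i : ℕ)])) (F.image ((⇑σ)^[(j : ℕ)])))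
    (hcover : Finset.univ.biUnion (fun i : Fin 5 => F.image ((⇑σ)^[(i : ℕ)])) = Finset.univ)
    (l : ℕ) :
    (Dl G l F Finset.univ : ℤ) =
      (Dl G l (F ∪ F.image ⇑σ ∪ F.image ((⇑σ)^[2]))
            (F ∪ F.image ⇑σ ∪ F.image ((⇑σ)^[2])) : ℤ) -
        (Dl G l (F ∪ F.image ⇑σ) (F ∪ F.image ⇑σ) : ℤ) :=
  stmt8_general G σ F hdisj hcover l
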